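/- arXiv:1909.06821 — 6 statements merged into one kernel-verified Lean document; each statement's English description precedes it below -/
import Mathlib

section
/- Let A₁, ..., A_k be real symmetric matrices and B ⊆ {0,1}^k. Suppose (i) for every index i there is a unique i⁻ such that the spectrum of A_{i⁻} equals the negative of the spectrum of A_i (as multisets), (ii) for each β ∈ B there is a unique β' ∈ B with {j : β'_j = 1} = {i⁻ : β_i = 1}, and (iii) the polynomial p(x₁,...,x_k) = Σ_{β∈B} x₁^{β₁}⋯x_k^{β_k} is odd (p(−x) = −p(x)). Then the matrix M = Σ_{β∈B} A₁^{⊗β₁} ⊗ ⋯ ⊗ A_k^{⊗β_k} has a symmetric spectrum. -/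
/-!
Diagonalise each `A i = U i * D i * (U i)ᵀ`. The Kronecker product of the `U i` diagonalises every
summand of `M` at once, so the eigenvalues of `M` are the values `p(λ)` at the tuples `λ` with
`λᵢ` an eigenvalue of `A i`. Since `p` is odd, `-p(λ) = p(-λ)`; the tuples `-λ` are the tuples `λ`
with coordinates permuted by the involution `i ↦ i⁻`, and `p` is invariant under this permutation
because `B` is.
-/

open Polynomial Matrix

/-- The polynomial `p(x) = ∑_{β ∈ B} x^β` of the NEPS with basis `B`, as a function of `x`. -/
def nepsPoly {ι R : Type*} [Fintype ι] [CommSemiring R] (B : Finset (ι → Bool)) (x : ι → R) : R :=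
  ∑ β ∈ B, ∏ i, if β i then x i else 1

theorem nepsPoly_comp_perm {ι R : Type*} [Fintype ι] [CommSemiring R] {B : Finset (ι → Bool)}
    (σ : Equiv.Perm ι) (hB : ∀ β, β ∘ σ ∈ B ↔ β ∈ B) (x : ι → R) :
    nepsPoly B (x ∘ σ) = nepsPoly B x := by
  refine (Finset.sum_equiv (σ.symm.arrowCongr (Equiv.refl Bool)) (fun β => (hB β).symm) ?_).symm
  intro β _
  exact (Equiv.prod_comp σ fun i => if β i then x i else 1).symm

namespace Matrix

section piKronecker

variable {ι : Type*} [Fintype ι] {m n p : ι → Type*} {R : Type*} [CommSemiring R]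

def piKronecker (A : ∀ i, Matrix (m i) (n i) R) : Matrix (∀ i, m i) (∀ i, n i) R :=
  of fun u v => ∏ i, A i (u i) (v i)

@[simp]
theorem piKronecker_apply (A : ∀ i, Matrix (m i) (n i) R) (u : ∀ i, m i) (v : ∀ i, n i) :
    piKronecker A u v = ∏ i, A i (u i) (v i) :=
  rfl

theorem piKronecker_mul [DecidableEq ι] [∀ i, Fintype (n i)] (A : ∀ i, Matrix (m i) (n i) R)
    (B : ∀ i, Matrix (n i) (p i) R) :
    piKronecker A * piKronecker B = piKronecker fun i => A i * B i := by
  ext u w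
  simp only [mul_apply, piKronecker_apply, Fintype.prod_sum, Finset.prod_mul_distrib]

theorem piKronecker_diagonal [∀ i, DecidableEq (n i)] (d : ∀ i, n i → R) :
    piKronecker (fun i => diagonal (d i)) = diagonal fun u => ∏ i, d i (u i) := by
  ext u v
  simp only [piKronecker_apply, diagonal_apply, Fintype.prod_ite_zero, funext_iff]

theorem piKronecker_one [∀ i, DecidableEq (n i)] :
    piKronecker (fun i => (1 : Matrix (n i) (n i) R)) = 1 := by
  simpa using piKronecker_diagonal (R := R) fun i (_ : n i) => (1 : R)

end piKronecker

theorem roots_charpoly_conj_diagonal {R ν : Type*} [CommRing R] [IsDomain R] [Fintype ν]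
    [DecidableEq ν] {S T : Matrix ν ν R} (hTS : T * S = 1) (d : ν → R) :
    (S * diagonal d * T).charpoly.roots = Finset.univ.val.map d := by
  rw [charpoly_mul_comm, ← mul_assoc, hTS, one_mul, charpoly_diagonal, roots_prod]
  · simp
  · simp [Finset.prod_ne_zero_iff, X_sub_C_ne_zero]

variable {ι : Type*} [Fintype ι] [DecidableEq ι] {n : ι → Type*} [∀ i, Fintype (n i)]
  [∀ i, DecidableEq (n i)]

theorem sum_piKronecker_eq_conj_diagonal {R : Type*} [CommSemiring R]
    {A U V : ∀ i, Matrix (n i) (n i) R} {d : ∀ i, n i → R}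
    (hA : ∀ i, A i = U i * diagonal (d i) * V i) (hUV : ∀ i, U i * V i = 1)
    (B : Finset (ι → Bool)) :
    ∑ β ∈ B, piKronecker (fun i => if β i then A i else 1)
      = piKronecker U * diagonal (fun u => nepsPoly B fun i => d i (u i)) * piKronecker V := by
  have hfactor : ∀ (β : ι → Bool) i, (if β i then A i else 1)
      = U i * diagonal (fun m => if β i then d i m else 1) * V i := by
    intro β i
    cases β i
    · simp only [Bool.false_eq_true, if_false, diagonal_one, mul_one, hUV]
    · simp only [if_true, hA]
  have hterm : ∀ β : ι → Bool, piKronecker (fun i => if β i then A i else 1)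
      = piKronecker U * diagonal (fun u => ∏ i, if β i then d i (u i) else 1) * piKronecker V := by
    intro β
    rw [← piKronecker_diagonal fun i m => if β i then d i m else 1, piKronecker_mul,
      piKronecker_mul]
    exact congrArg piKronecker (funext (hfactor β))
  have hsum : ∑ β ∈ B, diagonal (fun u : ∀ i, n i => ∏ i, if β i then d i (u i) else 1)
      = diagonal fun u : ∀ i, n i => nepsPoly B fun i => d i (u i) := by
    ext u v
    by_cases huv : u = v <;> simp [nepsPoly, huv, sum_apply]
  rw [Finset.sum_congr rfl fun β _ => hterm β, ← Finset.sum_mul, ← Finset.mul_sum, hsum]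

theorem IsHermitian.roots_charpoly_sum_piKronecker {𝕜 : Type*} [RCLike 𝕜]
    {A : ∀ i, Matrix (n i) (n i) 𝕜} (hA : ∀ i, (A i).IsHermitian) (B : Finset (ι → Bool)) :
    (∑ β ∈ B, piKronecker fun i => if β i then A i else 1).charpoly.roots
      = Finset.univ.val.map fun u : ∀ i, n i =>
          nepsPoly B fun i => ((hA i).eigenvalues (u i) : 𝕜) := by
  let U : ∀ i, Matrix (n i) (n i) 𝕜 := fun i => (hA i).eigenvectorUnitary
  have hUU : ∀ i, U i * star (U i) = 1 :=
    fun i => Unitary.mul_star_self_of_mem (hA i).eigenvectorUnitary.2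
  have hUU' : ∀ i, star (U i) * U i = 1 :=
    fun i => Unitary.star_mul_self_of_mem (hA i).eigenvectorUnitary.2
  have hA' : ∀ i, A i = U i * diagonal (fun m => ((hA i).eigenvalues m : 𝕜)) * star (U i) :=
    fun i => (hA i).spectral_theorem
  rw [sum_piKronecker_eq_conj_diagonal hA' hUU, roots_charpoly_conj_diagonal]
  simp only [piKronecker_mul, hUU', piKronecker_one]

end Matrix

namespace Multiset

variable {ι : Type*} [Fintype ι] [DecidableEq ι] {κ κ' : ι → Type*} [∀ i, Fintype (κ i)]
  [∀ i, Fintype (κ' i)] {γ : Type*} [DecidableEq γ]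

theorem count_map_univ {α : Type*} [Fintype α] (f : α → γ) (c : γ) :
    count c (Finset.univ.val.map f) = Fintype.card {x // c = f x} := by
  rw [count_map, Fintype.card_subtype]
  rfl

theorem count_map_univ_pi (d : ∀ i, κ i → γ) (t : ι → γ) :
    count t (Finset.univ.val.map fun (w : ∀ i, κ i) i => d i (w i))
      = ∏ i, count (t i) (Finset.univ.val.map (d i)) := by
  have hfiber : {w : ∀ i, κ i // t = fun i => d i (w i)} ≃ ∀ i, {x : κ i // t i = d i x} :=
    (Equiv.subtypeEquivRight fun w => by rw [funext_iff]).trans Equiv.subtypePiEquivPi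
  rw [count_map_univ, Fintype.card_congr hfiber, Fintype.card_pi]
  exact Finset.prod_congr rfl fun i _ => (count_map_univ (d i) (t i)).symm

theorem map_univ_pi_eq_map_comp (σ : Equiv.Perm ι) {d : ∀ i, κ i → γ} {d' : ∀ i, κ' i → γ}
    (h : ∀ i, Finset.univ.val.map (d' i) = Finset.univ.val.map (d (σ i))) :
    Finset.univ.val.map (fun (w : ∀ i, κ' i) i => d' i (w i))
      = (Finset.univ.val.map fun (w : ∀ i, κ i) i => d i (w i)).map (· ∘ σ) := by
  ext t
  have hinj : Function.Injective fun x : ι → γ => x ∘ σ := σ.surjective.injective_comp_right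
  rw [← show (t ∘ σ.symm) ∘ σ = t by ext; simp, count_map_eq_count' _ _ hinj,
    count_map_univ_pi, count_map_univ_pi,
    ← Equiv.prod_comp σ fun i => count ((t ∘ σ.symm) i) (Finset.univ.val.map (d i))]
  simp [h]

theorem map_neg_map_univ_nepsPoly {R : Type*} [CommRing R] [DecidableEq R]
    {B : Finset (ι → Bool)} (hodd : ∀ x : ι → R, nepsPoly B (-x) = -nepsPoly B x)
    (σ : Equiv.Perm ι) (hB : ∀ β, β ∘ σ ∈ B ↔ β ∈ B) {d : ∀ i, κ i → R}
    (hd : ∀ i, Finset.univ.val.map (fun m => -d i m) = Finset.univ.val.map (d (σ i))) :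
    (Finset.univ.val.map fun u : ∀ i, κ i => nepsPoly B fun i => d i (u i)).map Neg.neg
      = Finset.univ.val.map fun u : ∀ i, κ i => nepsPoly B fun i => d i (u i) :=
  calc (Finset.univ.val.map fun u : ∀ i, κ i => nepsPoly B fun i => d i (u i)).map Neg.neg
      = (Finset.univ.val.map fun (u : ∀ i, κ i) i => -d i (u i)).map (nepsPoly B) := by
        rw [map_map, map_map]
        exact map_congr rfl fun u _ => (hodd _).symm
    _ = ((Finset.univ.val.map fun (u : ∀ i, κ i) i => d i (u i)).map (· ∘ σ)).map
          (nepsPoly B) := by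
        rw [map_univ_pi_eq_map_comp σ hd]
    _ = Finset.univ.val.map fun u : ∀ i, κ i => nepsPoly B fun i => d i (u i) := by
        rw [map_map, map_map]
        exact map_congr rfl fun u _ => nepsPoly_comp_perm σ hB _

theorem count_neg_eq_count_of_map_neg {α : Type*} [InvolutiveNeg α] [DecidableEq α]
    {s : Multiset α} (h : s.map Neg.neg = s) (a : α) : count (-a) s = count a s := by
  conv_lhs => rw [← h]
  exact count_map_eq_count' _ _ neg_injective a

end Multiset

theorem Function.involutive_of_map_neg_eq {ι α : Type*} [InvolutiveNeg α] {s : ι → Multiset α}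
    {f : ι → ι} (hf : ∀ i, s (f i) = (s i).map Neg.neg)
    (huniq : ∀ i j, s j = (s i).map Neg.neg → j = f i) : Function.Involutive f :=
  fun i => (huniq (f i) i (by simp [hf, Multiset.map_map])).symm

theorem Finset.comp_mem_iff_of_forall_exists {ι : Type*} {f : ι → ι} (hf : Function.Involutive f)
    {B : Finset (ι → Bool)}
    (h : ∀ β ∈ B, ∃ β' ∈ B, ∀ j, β' j = true ↔ ∃ i, β i = true ∧ f i = j) (β : ι → Bool) :
    β ∘ f ∈ B ↔ β ∈ B := by
  have hmem : ∀ β ∈ B, β ∘ f ∈ B := by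
    intro β hβ
    obtain ⟨β', hβ'B, hβ'⟩ := h β hβ
    convert hβ'B using 1
    funext j
    rw [Bool.eq_iff_iff, hβ']
    exact ⟨fun hj => ⟨f j, hj, hf j⟩, fun ⟨i, hi, hij⟩ => by simpa [← hij, hf i] using hi⟩
  refine ⟨fun hβ => ?_, hmem β⟩
  simpa [Function.comp_assoc, hf.comp_self] using hmem _ hβ

/-- NEPS symmetric-spectrum theorem in matrix form: if the list of symmetric
matrices is symmetric (via i ↦ i⁻), the basis B is compatible with it, and the
associated polynomial p is odd, then M = ∑_{β∈B} A₁^{⊗β₁} ⊗ ⋯ ⊗ A_k^{⊗β_k}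
has a symmetric spectrum. -/
theorem neps_symmetric_spectrum (k : ℕ) (nn : Fin k → ℕ)
    (A : (i : Fin k) → Matrix (Fin (nn i)) (Fin (nn i)) ℝ)
    (hsym : ∀ i, (A i).IsSymm)
    (B : Finset (Fin k → Bool))
    (neg : Fin k → Fin k)
    (hneg : ∀ i, (A (neg i)).charpoly.roots
      = Multiset.map (fun x : ℝ => -x) (A i).charpoly.roots)
    (hneguniq : ∀ i j, (A j).charpoly.roots
      = Multiset.map (fun x : ℝ => -x) (A i).charpoly.roots → j = neg i)
    (hcompat : ∀ β ∈ B, ∃! β' : Fin k → Bool, β' ∈ B ∧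
      ∀ j, β' j = true ↔ ∃ i, β i = true ∧ neg i = j)
    (hodd : ∀ x : Fin k → ℝ,
      (∑ β ∈ B, ∏ i, (if β i then -x i else 1))
        = -(∑ β ∈ B, ∏ i, (if β i then x i else 1)))
    (M : Matrix ((i : Fin k) → Fin (nn i)) ((i : Fin k) → Fin (nn i)) ℝ)
    (hM : ∀ u v, M u v = ∑ β ∈ B, ∏ i,
      (if β i then A i (u i) (v i) else if u i = v i then (1:ℝ) else 0)) :
    ∀ lam : ℝ, Multiset.count (-lam) M.charpoly.roots
      = Multiset.count lam M.charpoly.roots := by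
  have hH : ∀ i, (A i).IsHermitian := fun i => isHermitian_iff_isSymm.mpr (hsym i)
  let d : ∀ i, Fin (nn i) → ℝ := fun i => (hH i).eigenvalues
  have hMsum : M = ∑ β ∈ B, piKronecker fun i => if β i then A i else 1 := by
    ext u v
    simp only [hM, Matrix.sum_apply, piKronecker_apply]
    refine Finset.sum_congr rfl fun β _ => Finset.prod_congr rfl fun i _ => ?_
    split <;> simp [one_apply]
  have hroots : M.charpoly.roots
      = Finset.univ.val.map fun u : ∀ i, Fin (nn i) => nepsPoly B fun i => d i (u i) := by
    rw [hMsum, IsHermitian.roots_charpoly_sum_piKronecker hH]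
    simp [d]
  have hinv : Function.Involutive neg := Function.involutive_of_map_neg_eq hneg hneguniq
  have hspec : ∀ i, Finset.univ.val.map (fun m => -d i m) = Finset.univ.val.map (d (neg i)) := by
    intro i
    have := hneg i
    rw [(hH _).roots_charpoly_eq_eigenvalues, (hH _).roots_charpoly_eq_eigenvalues,
      Multiset.map_map, RCLike.ofReal_real_eq_id, Function.id_comp] at this
    exact this.symm
  have hB : ∀ β, β ∘ neg ∈ B ↔ β ∈ B :=
    Finset.comp_mem_iff_of_forall_exists hinv fun β hβ => (hcompat β hβ).exists
  rw [hroots]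
  exact Multiset.count_neg_eq_count_of_map_neg
    (Multiset.map_neg_map_univ_nepsPoly hodd hinv.toPerm hB hspec)
end

section
/- Let Γ₁ and Γ₂ be cospectral graphs. Then the Cartesian product of the all-positive signed graph Γ₁⁺ and the all-negative signed graph Γ₂⁻, with adjacency matrix A_{Γ₁} ⊗ I − I ⊗ A_{Γ₂}, has a symmetric spectrum. -/
open Polynomial Matrix Kronecker

/-!
Unitary diagonalisations `A = U D U*` and `B = V E V*` give
`A ⊗ 1 - 1 ⊗ B = (U ⊗ V) (D ⊗ 1 - 1 ⊗ E) (U ⊗ V)*`, and `D ⊗ 1 - 1 ⊗ E` is diagonal with entries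
`a - b`. So the spectrum of `A ⊗ 1 - 1 ⊗ B` is the multiset of differences `a - b` of an eigenvalue
of `A` and one of `B`. For cospectral `A` and `B` this is the multiset of differences over `S × S`
for a single multiset `S`, which the swap `(a, b) ↦ (b, a)` maps to its negative.
-/

theorem Multiset.product_map_map {α β γ δ : Type*} (f : α → γ) (g : β → δ)
    (s : Multiset α) (t : Multiset β) :
    s.map f ×ˢ t.map g = (s ×ˢ t).map (Prod.map f g) := by
  induction s using Multiset.induction <;> simp_all [Multiset.map_map]

theorem Multiset.map_neg_map_sub_product_self {G : Type*} [AddGroup G] (s : Multiset G) :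
    ((s ×ˢ s).map fun p => p.1 - p.2).map Neg.neg = (s ×ˢ s).map fun p => p.1 - p.2 := by
  conv_rhs => rw [← Multiset.map_swap_product]
  simp only [Multiset.map_map, Function.comp_def, neg_sub, Prod.fst_swap, Prod.snd_swap]

namespace Matrix

variable {ι κ : Type*} [DecidableEq ι] [DecidableEq κ]

theorem diagonal_kronecker_one_sub_one_kronecker_diagonal {R : Type*} [Ring R]
    (d : ι → R) (e : κ → R) :
    diagonal d ⊗ₖ (1 : Matrix κ κ R) - (1 : Matrix ι ι R) ⊗ₖ diagonal e
      = diagonal fun p => d p.1 - e p.2 := by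
  simp only [← diagonal_one, diagonal_kronecker_diagonal, diagonal_sub, mul_one, one_mul]

variable [Fintype ι] [Fintype κ] {R : Type*} [CommRing R]

theorem conj_kronecker_one_sub_one_kronecker_conj {P P' : Matrix ι ι R} {Q Q' : Matrix κ κ R}
    (hP : P * P' = 1) (hQ : Q * Q' = 1) (A : Matrix ι ι R) (B : Matrix κ κ R) :
    (P * A * P') ⊗ₖ (1 : Matrix κ κ R) - (1 : Matrix ι ι R) ⊗ₖ (Q * B * Q')
      = (P ⊗ₖ Q) * (A ⊗ₖ (1 : Matrix κ κ R) - (1 : Matrix ι ι R) ⊗ₖ B) * (P' ⊗ₖ Q') := by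
  rw [Matrix.mul_sub, Matrix.sub_mul, ← mul_kronecker_mul, ← mul_kronecker_mul,
    ← mul_kronecker_mul, ← mul_kronecker_mul, mul_one, mul_one, hP, hQ]

theorem charpoly_mul_mul_of_mul_eq_one {P Q : Matrix ι ι R} (h : Q * P = 1) (M : Matrix ι ι R) :
    (P * M * Q).charpoly = M.charpoly := by
  rw [mul_assoc, charpoly_mul_comm, mul_assoc, h, mul_one]

theorem roots_charpoly_diagonal [IsDomain R] (d : ι → R) :
    (diagonal d).charpoly.roots = Finset.univ.val.map d := by
  rw [charpoly_diagonal, roots_prod _ _ (Finset.prod_ne_zero_iff.mpr fun i _ => X_sub_C_ne_zero _)]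
  simp

theorem IsHermitian.roots_charpoly_kronecker_one_sub_one_kronecker {𝕜 : Type*} [RCLike 𝕜]
    {A : Matrix ι ι 𝕜} {B : Matrix κ κ 𝕜} (hA : A.IsHermitian) (hB : B.IsHermitian) :
    (A ⊗ₖ (1 : Matrix κ κ 𝕜) - (1 : Matrix ι ι 𝕜) ⊗ₖ B).charpoly.roots
      = (A.charpoly.roots ×ˢ B.charpoly.roots).map fun p => p.1 - p.2 := by
  let U := hA.eigenvectorUnitary
  let V := hB.eigenvectorUnitary
  have hUV : (star U.1 ⊗ₖ star V.1) * (U.1 ⊗ₖ V.1) = 1 := by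
    rw [← mul_kronecker_mul, Unitary.star_mul_self_of_mem U.2, Unitary.star_mul_self_of_mem V.2,
      one_kronecker_one]
  conv_lhs => rw [hA.spectral_theorem, hB.spectral_theorem]
  rw [Unitary.conjStarAlgAut_apply, Unitary.conjStarAlgAut_apply,
    conj_kronecker_one_sub_one_kronecker_conj (Unitary.mul_star_self_of_mem U.2)
      (Unitary.mul_star_self_of_mem V.2), charpoly_mul_mul_of_mul_eq_one hUV,
    diagonal_kronecker_one_sub_one_kronecker_diagonal, roots_charpoly_diagonal,
    hA.roots_charpoly_eq_eigenvalues, hB.roots_charpoly_eq_eigenvalues,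
    Multiset.product_map_map, ← Finset.product_val, Finset.univ_product_univ, Multiset.map_map]
  rfl

end Matrix

theorem cartesian_pos_neg_symmetric_spectrum_general (n m : ℕ)
    (A₁ : Matrix (Fin n) (Fin n) ℝ) (A₂ : Matrix (Fin m) (Fin m) ℝ)
    (h₁sym : A₁.IsSymm) (h₂sym : A₂.IsSymm)
    (hcospec : A₁.charpoly = A₂.charpoly) :
    ∀ lam : ℝ,
      Multiset.count (-lam)
        (A₁ ⊗ₖ (1 : Matrix (Fin m) (Fin m) ℝ)
          - (1 : Matrix (Fin n) (Fin n) ℝ) ⊗ₖ A₂).charpoly.roots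
      = Multiset.count lam
        (A₁ ⊗ₖ (1 : Matrix (Fin m) (Fin m) ℝ)
          - (1 : Matrix (Fin n) (Fin n) ℝ) ⊗ₖ A₂).charpoly.roots := by
  intro lam
  have h₁ : A₁.IsHermitian := isHermitian_iff_isSymm.mpr h₁sym
  have h₂ : A₂.IsHermitian := isHermitian_iff_isSymm.mpr h₂sym
  rw [h₁.roots_charpoly_kronecker_one_sub_one_kronecker h₂, hcospec,
    ← Multiset.count_map_eq_count' Neg.neg _ neg_injective lam,
    Multiset.map_neg_map_sub_product_self]

/-- If Γ₁ and Γ₂ are cospectral graphs, the Cartesian product Γ₁⁺ × Γ₂⁻, with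
adjacency matrix A₁ ⊗ I − I ⊗ A₂, has a symmetric spectrum. -/
theorem cartesian_pos_neg_symmetric_spectrum (n m : ℕ)
    (A₁ : Matrix (Fin n) (Fin n) ℝ) (A₂ : Matrix (Fin m) (Fin m) ℝ)
    (h₁sym : A₁.IsSymm) (h₂sym : A₂.IsSymm)
    (h₁val : ∀ i j, A₁ i j = 0 ∨ A₁ i j = 1) (h₂val : ∀ i j, A₂ i j = 0 ∨ A₂ i j = 1)
    (h₁diag : ∀ i, A₁ i i = 0) (h₂diag : ∀ i, A₂ i i = 0)
    (hcospec : A₁.charpoly = A₂.charpoly) :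
    ∀ lam : ℝ,
      Multiset.count (-lam)
        (A₁ ⊗ₖ (1 : Matrix (Fin m) (Fin m) ℝ)
          - (1 : Matrix (Fin n) (Fin n) ℝ) ⊗ₖ A₂).charpoly.roots
      = Multiset.count lam
        (A₁ ⊗ₖ (1 : Matrix (Fin m) (Fin m) ℝ)
          - (1 : Matrix (Fin n) (Fin n) ℝ) ⊗ₖ A₂).charpoly.roots :=
  cartesian_pos_neg_symmetric_spectrum_general n m A₁ A₂ h₁sym h₂sym hcospec
end

section
/- Let Σ be a signed graph on n vertices and let Π₁,...,Π_n be rooted signed graphs with roots r₁,...,r_n. The characteristic polynomial of the rooted product Σ[Π₁,...,Π_n] equals the determinant of the n×n matrix with diagonal entries χ(Π_i, λ) and off-diagonal (i,j)-entries −A_Σ(i,j)·χ(Π_i − r_i, λ). -/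
open Polynomial Matrix

/-- determinant of a dependent block-diagonal matrix -/
lemma my_det_blockDiagonal' {R : Type*} [CommRing R] {n : ℕ} {m : Fin n → ℕ}
    (M : ∀ i, Matrix (Fin (m i)) (Fin (m i)) R) :
    (Matrix.blockDiagonal' M).det = ∏ i, (M i).det := by
  have hbt : (Matrix.blockDiagonal' M).BlockTriangular Sigma.fst := by
    rintro ⟨i, a⟩ ⟨j, b⟩ h
    exact Matrix.blockDiagonal'_apply_ne _ _ _ (ne_of_gt h)
  rw [hbt.det]
  rw [Finset.prod_subset (Finset.subset_univ _)]
  · refine Finset.prod_congr rfl fun i _ => ?_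
    let ei : Fin (m i) ≃ {x : (j : Fin n) × Fin (m j) // x.1 = i} :=
      { toFun := fun a => ⟨⟨i, a⟩, rfl⟩
        invFun := fun x => Fin.cast (congrArg m x.2) x.1.2
        left_inv := fun a => rfl
        right_inv := by rintro ⟨⟨j, b⟩, rfl⟩; rfl }
    rw [← Matrix.det_submatrix_equiv_self ei]
    congr 1
    ext a b
    simp [Matrix.toSquareBlock_def, ei]
  · intro i _ hi
    haveI : IsEmpty {x : (j : Fin n) × Fin (m j) // x.1 = i} := by
      refine ⟨fun x => ?_⟩
      have := Finset.mem_image_of_mem Sigma.fst (Finset.mem_univ x.1)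
      rw [x.2] at this
      exact hi this
    exact Matrix.det_isEmpty

/-- the (r,r) entry of an adjugate is the minor obtained by deleting row/col r -/
def delRootEquiv {ι : Type*} [DecidableEq ι] (r : ι) : ({a : ι // a ≠ r} ⊕ Unit) ≃ ι where
  toFun := Sum.elim (fun a => a.1) (fun _ => r)
  invFun := fun x => if h : x = r then Sum.inr () else Sum.inl ⟨x, h⟩
  left_inv := by
    rintro (⟨a, ha⟩ | ⟨⟩)
    · simp [ha]
    · simp
  right_inv := fun x => by by_cases h : x = r <;> simp [h]

lemma adjugate_diag_eq_minor {R : Type*} [CommRing R] {ι : Type*} [Fintype ι] [DecidableEq ι]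
    (M : Matrix ι ι R) (r : ι) :
    M.adjugate r r = (M.submatrix (fun a : {a : ι // a ≠ r} => (a : ι))
      (fun a : {a : ι // a ≠ r} => (a : ι))).det := by
  rw [Matrix.adjugate_apply]
  rw [← Matrix.det_submatrix_equiv_self (delRootEquiv r)]
  have h2 : (M.updateRow r (Pi.single r 1)).submatrix (delRootEquiv r) (delRootEquiv r) =
      Matrix.fromBlocks
        (M.submatrix (fun a : {a : ι // a ≠ r} => (a : ι)) (fun a : {a : ι // a ≠ r} => (a : ι)))
        (Matrix.of fun a _ => M a.1 r) 0 1 := by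
    ext x y
    cases x with
    | inl a =>
      cases y with
      | inl b => simp [delRootEquiv, Matrix.updateRow_ne a.2]
      | inr u => simp [delRootEquiv, Matrix.updateRow_ne a.2]
    | inr u =>
      cases y with
      | inl b => simp [delRootEquiv, Pi.single_eq_of_ne b.2]
      | inr u' => simp [delRootEquiv]
  rw [h2, Matrix.det_fromBlocks_zero₂₁, Matrix.det_one, mul_one]

lemma charmatrix_submatrix' {R : Type*} [CommRing R] {ι κ : Type*} [Fintype ι] [DecidableEq ι]
    [Fintype κ] [DecidableEq κ] (M : Matrix ι ι R) (f : κ → ι) (hf : Function.Injective f) :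
    charmatrix (M.submatrix f f) = (charmatrix M).submatrix f f := by
  refine Matrix.ext fun a b => ?_
  by_cases h : a = b
  · subst h; simp
  · rw [charmatrix_apply_ne _ _ _ h, Matrix.submatrix_apply, Matrix.submatrix_apply,
      charmatrix_apply_ne _ _ _ (fun hc => h (hf hc))]


lemma adjugate_charmatrix_diag {R : Type*} [CommRing R] {ι : Type*} [Fintype ι] [DecidableEq ι]
    (M : Matrix ι ι R) (r : ι) :
    (charmatrix M).adjugate r r = (M.submatrix (fun a : {a : ι // a ≠ r} => (a : ι))
      (fun a : {a : ι // a ≠ r} => (a : ι))).charpoly := by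
  rw [Matrix.charpoly, charmatrix_submatrix' M _ Subtype.coe_injective,
    adjugate_diag_eq_minor]


def rootEquiv (n : ℕ) (m : Fin n → ℕ) (r : (i : Fin n) → Fin (m i)) :
    (Fin n ⊕ ((i : Fin n) × {a : Fin (m i) // a ≠ r i})) ≃ ((i : Fin n) × Fin (m i)) where
  toFun := Sum.elim (fun i => ⟨i, r i⟩) (fun x => ⟨x.1, x.2.1⟩)
  invFun := fun x => if h : x.2 = r x.1 then Sum.inl x.1 else Sum.inr ⟨x.1, x.2, h⟩
  left_inv := by
    rintro (i | ⟨i, a, ha⟩)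
    · simp
    · simp [ha]
  right_inv := by
    rintro ⟨i, a⟩
    by_cases h : a = r i <;> simp [h]

/-- Godsil–McKay rooted-product formula for signed graphs: the characteristic
polynomial of the rooted product Σ[Π₁,…,Π_n] equals the determinant of the
n×n matrix over ℝ[λ] with diagonal entries χ(Π_i) and off-diagonal entries
−A_Σ(i,j)·χ(Π_i − r_i). -/
theorem signed_rooted_product_charpoly (n : ℕ) (AS : Matrix (Fin n) (Fin n) ℝ)
    (m : Fin n → ℕ)
    (Bm : (i : Fin n) → Matrix (Fin (m i)) (Fin (m i)) ℝ)
    (r : (i : Fin n) → Fin (m i))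
    (R : Matrix ((i : Fin n) × Fin (m i)) ((i : Fin n) × Fin (m i)) ℝ)
    (hR : ∀ x y : (i : Fin n) × Fin (m i), R x y =
      if h : x.1 = y.1 then
        Bm x.1 x.2 (cast (congrArg (fun t => Fin (m t)) h.symm) y.2)
      else if x.2 = r x.1 ∧ y.2 = r y.1 then AS x.1 y.1 else 0) :
    R.charpoly = Matrix.det (Matrix.of fun i j : Fin n =>
      if i = j then (Bm i).charpoly
      else -(Polynomial.C (AS i j)) *
        ((Bm i).submatrix (fun a : {a : Fin (m i) // a ≠ r i} => (a : Fin (m i)))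
          (fun a : {a : Fin (m i) // a ≠ r i} => (a : Fin (m i)))).charpoly) := by
  classical
  set cm : (i : Fin n) → Matrix (Fin (m i)) (Fin (m i)) ℝ[X] :=
    fun i => charmatrix (Bm i) with hcm
  set Q : Matrix ((i : Fin n) × Fin (m i)) ((i : Fin n) × Fin (m i)) ℝ[X] :=
    Matrix.blockDiagonal' (fun i => (cm i).adjugate) with hQ
  set N : Matrix ((i : Fin n) × Fin (m i)) ((i : Fin n) × Fin (m i)) ℝ[X] :=
    charmatrix R with hNdef
  set EC : Matrix ((i : Fin n) × Fin (m i)) ((i : Fin n) × Fin (m i)) ℝ[X] :=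
    Matrix.of (fun x y => if x.1 ≠ y.1 ∧ x.2 = r x.1 ∧ y.2 = r y.1
      then -(C (AS x.1 y.1)) else 0) with hEC
  -- decompose the characteristic matrix
  have hN : N = Matrix.blockDiagonal' cm + EC := by
    refine Matrix.ext fun x y => ?_
    obtain ⟨i, a⟩ := x
    obtain ⟨j, b⟩ := y
    by_cases hij : i = j
    · subst hij
      by_cases hab : a = b
      · subst hab
        rw [hNdef, charmatrix_apply_eq, hR]
        simp [hEC, hcm, charmatrix_apply_eq]
      · have hxy : (⟨i, a⟩ : (i : Fin n) × Fin (m i)) ≠ ⟨i, b⟩ := by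
          simp [hab]
        rw [hNdef, charmatrix_apply_ne _ _ _ hxy, hR]
        simp [hEC, hcm, charmatrix_apply_ne _ _ _ hab]
    · have hxy : (⟨i, a⟩ : (i : Fin n) × Fin (m i)) ≠ ⟨j, b⟩ := by
        simp [hij]
      rw [hNdef, charmatrix_apply_ne _ _ _ hxy, hR]
      rw [Matrix.add_apply, Matrix.blockDiagonal'_apply_ne _ _ _ hij]
      dsimp only
      by_cases hroot : a = r i ∧ b = r j
      · simp [hEC, hij, hroot]
      · simp [hEC, hij, hroot]
  have hQcm : Q * Matrix.blockDiagonal' cm =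
      Matrix.blockDiagonal' (fun i => (Bm i).charpoly •
        (1 : Matrix (Fin (m i)) (Fin (m i)) ℝ[X])) := by
    rw [hQ, ← Matrix.blockDiagonal'_mul]
    refine congrArg Matrix.blockDiagonal' (funext fun i => ?_)
    rw [Matrix.adjugate_mul]
    rfl
  have hQE : ∀ x y, (Q * EC) x y = Q x ⟨x.1, r x.1⟩ * EC ⟨x.1, r x.1⟩ y := by
    intro x y
    rw [Matrix.mul_apply]
    refine Finset.sum_eq_single _ ?_ (by simp)
    rintro ⟨k, c⟩ - hz
    by_cases hk : x.1 = k
    · subst hk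
      have hc : c ≠ r x.1 := fun hc => hz (by simp [hc])
      have : EC ⟨x.1, c⟩ y = 0 := by simp [hEC, hc]
      rw [this, mul_zero]
    · obtain ⟨i, a⟩ := x
      rw [hQ, Matrix.blockDiagonal'_apply_ne _ _ _ hk, zero_mul]
  have hP : Q * N = Matrix.blockDiagonal' (fun i => (Bm i).charpoly •
      (1 : Matrix (Fin (m i)) (Fin (m i)) ℝ[X])) + Q * EC := by
    rw [hN, Matrix.mul_add, hQcm]
  set e := rootEquiv n m r with he
  set Amat : Matrix (Fin n) (Fin n) ℝ[X] := Matrix.of (fun i j : Fin n =>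
      if i = j then (Bm i).charpoly
      else -(Polynomial.C (AS i j)) *
        ((Bm i).submatrix (fun a : {a : Fin (m i) // a ≠ r i} => (a : Fin (m i)))
          (fun a : {a : Fin (m i) // a ≠ r i} => (a : Fin (m i)))).charpoly) with hA
  set Dmat : Matrix ((i : Fin n) × {a : Fin (m i) // a ≠ r i})
      ((i : Fin n) × {a : Fin (m i) // a ≠ r i}) ℝ[X] :=
    Matrix.diagonal (fun x => (Bm x.1).charpoly) with hD
  set Cmat : Matrix ((i : Fin n) × {a : Fin (m i) // a ≠ r i}) (Fin n) ℝ[X] :=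
    Matrix.of (fun x j => (Q * N) (e (Sum.inr x)) (e (Sum.inl j))) with hC
  have hblocks : (Q * N).submatrix e e = Matrix.fromBlocks Amat 0 Cmat Dmat := by
    ext x y
    rw [Matrix.submatrix_apply]
    cases x with
    | inl i =>
      cases y with
      | inl j =>
        have hei : e (Sum.inl i) = ⟨i, r i⟩ := rfl
        have hej : e (Sum.inl j) = ⟨j, r j⟩ := rfl
        rw [hei, hej, hP, Matrix.add_apply, hQE]
        by_cases hij : i = j
        · subst hij
          simp [hEC, hA, Matrix.blockDiagonal'_apply_eq]
        · rw [Matrix.blockDiagonal'_apply_ne _ _ _ hij]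
          have : EC ⟨i, r i⟩ ⟨j, r j⟩ = -(C (AS i j)) := by simp [hEC, hij]
          rw [this, hQ]
          have hq : Matrix.blockDiagonal' (fun i => (cm i).adjugate)
              (⟨i, r i⟩ : (i : Fin n) × Fin (m i)) ⟨i, r i⟩ = (cm i).adjugate (r i) (r i) :=
            Matrix.blockDiagonal'_apply_eq _ _ _ _
          rw [hq, hcm, adjugate_charmatrix_diag]
          simp [hA, hij, mul_comm]
      | inr y =>
        have hei : e (Sum.inl i) = ⟨i, r i⟩ := rfl
        have hey : e (Sum.inr y) = ⟨y.1, y.2.1⟩ := rfl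
        rw [hei, hey, hP, Matrix.add_apply, hQE]
        have hECy : EC (⟨i, r i⟩ : (i : Fin n) × Fin (m i)) ⟨y.1, y.2.1⟩ = 0 := by
          simp [hEC, y.2.2]
        rw [hECy, mul_zero, add_zero]
        by_cases hij : i = y.1
        · subst hij
          rw [Matrix.blockDiagonal'_apply_eq]
          simp [Matrix.one_apply, Ne.symm y.2.2]
        · rw [Matrix.blockDiagonal'_apply_ne _ _ _ hij]
          rfl
    | inr x =>
      cases y with
      | inl j => rfl
      | inr y =>
        have hex : e (Sum.inr x) = ⟨x.1, x.2.1⟩ := rfl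
        have hey : e (Sum.inr y) = ⟨y.1, y.2.1⟩ := rfl
        rw [hex, hey, hP, Matrix.add_apply, hQE]
        have hECy : EC (⟨x.1, r x.1⟩ : (i : Fin n) × Fin (m i)) ⟨y.1, y.2.1⟩ = 0 := by
          simp [hEC, y.2.2]
        rw [hECy, mul_zero, add_zero]
        by_cases hxy : x.1 = y.1
        · obtain ⟨i, a⟩ := x
          obtain ⟨j, b⟩ := y
          dsimp at hxy
          subst hxy
          rw [Matrix.blockDiagonal'_apply_eq]
          by_cases hab : a = b
          · subst hab
            simp [hD]
          · have : (⟨i, a⟩ : (i : Fin n) × {a : Fin (m i) // a ≠ r i}) ≠ ⟨i, b⟩ := by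
              simp [hab]
            rw [hD, Matrix.fromBlocks_apply₂₂, Matrix.diagonal_apply_ne _ this]
            have hab' : (a : Fin (m i)) ≠ (b : Fin (m i)) := fun h => hab (Subtype.ext h)
            rw [Matrix.smul_apply, Matrix.one_apply_ne hab', smul_zero]
        · obtain ⟨i, a⟩ := x
          obtain ⟨j, b⟩ := y
          dsimp at hxy
          rw [Matrix.blockDiagonal'_apply_ne _ _ _ hxy]
          have : (⟨i, a⟩ : (i : Fin n) × {a : Fin (m i) // a ≠ r i}) ≠ ⟨j, b⟩ := by
            simp [hxy]
          rw [hD, Matrix.fromBlocks_apply₂₂, Matrix.diagonal_apply_ne _ this]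
  have hdet : Q.det * N.det = Amat.det * Dmat.det := by
    rw [← Matrix.det_mul, ← Matrix.det_submatrix_equiv_self e (Q * N), hblocks,
      Matrix.det_fromBlocks_zero₁₂]
  have hQdet : Q.det = ∏ i, (Bm i).charpoly ^ (m i - 1) := by
    rw [hQ, my_det_blockDiagonal']
    refine Finset.prod_congr rfl fun i _ => ?_
    rw [Matrix.det_adjugate, Fintype.card_fin]
    rfl
  have hDdet : Dmat.det = ∏ i, (Bm i).charpoly ^ (m i - 1) := by
    rw [hD, Matrix.det_diagonal, ← Finset.univ_sigma_univ, Finset.prod_sigma]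
    refine Finset.prod_congr rfl fun i _ => ?_
    dsimp only
    show ∏ _x : {a : Fin (m i) // a ≠ r i}, (Bm i).charpoly = _
    rw [Finset.prod_const, Finset.card_univ]
    congr 1
    rw [Fintype.card_subtype_compl, Fintype.card_subtype_eq, Fintype.card_fin]
  have hQne : Q.det ≠ 0 := by
    rw [hQdet]
    refine Finset.prod_ne_zero_iff.mpr fun i _ => ?_
    exact pow_ne_zero _ (Matrix.charpoly_monic (Bm i)).ne_zero
  have hmain : Q.det * N.det = Q.det * Amat.det := by
    rw [hdet, hDdet, ← hQdet, mul_comm]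
  have := mul_left_cancel₀ hQne hmain
  rw [hNdef] at this
  exact this
end

section
/- Let Σ be a signed graph on n vertices with symmetric spectrum, and let p(λ) and q(λ) be real polynomials with p even and q odd (or p odd and q even). Then the polynomial P(λ) = det( p(λ)·I_n − q(λ)·A_Σ ) satisfies: for every real λ₀, P(λ₀) = 0 if and only if P(−λ₀) = 0. -/
open Polynomial Matrix

lemma my_eval_charpoly {n : ℕ} (A : Matrix (Fin n) (Fin n) ℝ) (x : ℝ) :
    A.charpoly.eval x = (x • (1 : Matrix (Fin n) (Fin n) ℝ) - A).det := by
  rw [Matrix.charpoly]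
  rw [← Polynomial.coe_evalRingHom, RingHom.map_det]
  congr 1
  ext i j
  by_cases h : i = j
  · subst h
    simp [charmatrix_apply_eq, Matrix.one_apply]
  · simp [charmatrix_apply_ne _ _ _ h, Matrix.one_apply, h]

lemma my_root_iff {n : ℕ} (A : Matrix (Fin n) (Fin n) ℝ)
    (hspec : ∀ lam : ℝ, Multiset.count (-lam) A.charpoly.roots
      = Multiset.count lam A.charpoly.roots) (x : ℝ) :
    A.charpoly.eval x = 0 ↔ A.charpoly.eval (-x) = 0 := by
  have h0 : A.charpoly ≠ 0 := A.charpoly_monic.ne_zero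
  have h1 : ∀ y : ℝ, A.charpoly.eval y = 0 ↔ y ∈ A.charpoly.roots := by
    intro y
    rw [Polynomial.mem_roots h0, Polynomial.IsRoot.def]
  rw [h1, h1, ← Multiset.count_pos, ← Multiset.count_pos, hspec]

lemma my_key {n : ℕ} (A : Matrix (Fin n) (Fin n) ℝ)
    (hspec : ∀ lam : ℝ, Multiset.count (-lam) A.charpoly.roots
      = Multiset.count lam A.charpoly.roots) (a b : ℝ) :
    (a • (1 : Matrix (Fin n) (Fin n) ℝ) - b • A).det = 0 ↔
    (a • (1 : Matrix (Fin n) (Fin n) ℝ) + b • A).det = 0 := by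
  by_cases hb : b = 0
  · simp [hb]
  · have e1 : a • (1 : Matrix (Fin n) (Fin n) ℝ) - b • A
        = b • ((a / b) • (1 : Matrix (Fin n) (Fin n) ℝ) - A) := by
      rw [smul_sub, smul_smul]
      field_simp
    have e2 : a • (1 : Matrix (Fin n) (Fin n) ℝ) + b • A
        = (-b) • ((-(a / b)) • (1 : Matrix (Fin n) (Fin n) ℝ) - A) := by
      rw [smul_sub, smul_smul]
      field_simp
      rw [neg_smul, sub_neg_eq_add]
    rw [e1, e2, Matrix.det_smul, Matrix.det_smul, ← my_eval_charpoly, ← my_eval_charpoly,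
      mul_eq_zero, mul_eq_zero]
    have hb' : (b : ℝ) ^ Fintype.card (Fin n) ≠ 0 := pow_ne_zero _ hb
    have hb'' : (-b : ℝ) ^ Fintype.card (Fin n) ≠ 0 := pow_ne_zero _ (neg_ne_zero.mpr hb)
    simp only [hb', hb'', false_or]
    exact my_root_iff A hspec (a / b)

/-- If Σ has symmetric spectrum, p is even and q odd (or vice versa), then
P(λ) = det(p(λ)I − q(λ)A_Σ) has zero set symmetric under negation. -/
theorem det_poly_combination_symmetric_zeros (n : ℕ)
    (A : Matrix (Fin n) (Fin n) ℝ) (hsym : A.IsSymm)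
    (hspec : ∀ lam : ℝ, Multiset.count (-lam) A.charpoly.roots
      = Multiset.count lam A.charpoly.roots)
    (p q : Polynomial ℝ)
    (hpq : ((∀ x : ℝ, p.eval (-x) = p.eval x) ∧ (∀ x : ℝ, q.eval (-x) = -q.eval x)) ∨
           ((∀ x : ℝ, p.eval (-x) = -p.eval x) ∧ (∀ x : ℝ, q.eval (-x) = q.eval x))) :
    ∀ lam₀ : ℝ,
      Matrix.det (p.eval lam₀ • (1 : Matrix (Fin n) (Fin n) ℝ) - q.eval lam₀ • A) = 0 ↔
      Matrix.det (p.eval (-lam₀) • (1 : Matrix (Fin n) (Fin n) ℝ) - q.eval (-lam₀) • A) = 0 := by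
  intro lam₀
  set a := p.eval lam₀
  set b := q.eval lam₀
  rcases hpq with ⟨hp, hq⟩ | ⟨hp, hq⟩
  · rw [hp, hq]
    have : a • (1 : Matrix (Fin n) (Fin n) ℝ) - (-b) • A
        = a • (1 : Matrix (Fin n) (Fin n) ℝ) + b • A := by
      rw [neg_smul, sub_neg_eq_add]
    rw [this]
    exact my_key A hspec a b
  · rw [hp, hq]
    have : (-a) • (1 : Matrix (Fin n) (Fin n) ℝ) - b • A
        = (-1 : ℝ) • (a • (1 : Matrix (Fin n) (Fin n) ℝ) + b • A) := by
      rw [smul_add, smul_smul, smul_smul]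
      ring_nf
      rw [neg_smul, neg_smul, sub_eq_add_neg]
    rw [this, Matrix.det_smul]
    have h1 : ((-1 : ℝ)) ^ Fintype.card (Fin n) ≠ 0 := pow_ne_zero _ (by norm_num)
    rw [mul_eq_zero]
    simp only [h1, false_or]
    exact my_key A hspec a b
end

section
/- Let Σ be a signed graph, and let G and H be cospectrally rooted graphs with roots u and v (i.e., χ(G,λ) = χ(H,λ) and χ(G−u,λ) = χ(H−v,λ)). Then the signed rooted products Σ[G⁺] and Σ[H⁺] are cospectral: χ(Σ[G⁺], λ) = χ(Σ[H⁺], λ). -/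
/-!
Ordering the vertices of `Σ[Π]` as pairs `(i, a)`, the characteristic matrix of the rooted
product is `1 ⊗ (λ - A_Π) - A_Σ ⊗ E_rr`, a perturbation of the invertible (over rational
functions) matrix `1 ⊗ (λ - A_Π)` of rank at most `|Σ|`. Sylvester's identity
`det (1 - U V) = det (1 - V U)` reduces its determinant to `det (χ(Π) I - χ(Π - r) A_Σ)`, the
entry `(λ - A_Π)⁻¹ r r` being `χ(Π - r) / χ(Π)` by Cramer's rule. Cospectrally rooted graphs
therefore give equal determinants.
-/

open Polynomial Matrix Kronecker

namespace Matrix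

variable {ι κ R : Type*} [Fintype κ] [DecidableEq κ]

theorem adjugate_apply_self [CommRing R] (A : Matrix κ κ R) (u : κ) :
    A.adjugate u u = (A.submatrix ((↑) : {a // a ≠ u} → κ) (↑)).det := by
  let e := Equiv.sumCompl (· ≠ u)
  let B := (A.updateRow u (Pi.single u 1)).submatrix e e
  have h₁₁ : B.toBlocks₁₁ = A.submatrix (↑) (↑) := by
    ext ⟨a, ha⟩ ⟨b, hb⟩
    simp [B, e, toBlocks₁₁, updateRow_ne ha]
  have h₂₁ : B.toBlocks₂₁ = 0 := by
    ext ⟨a, ha⟩ ⟨b, hb⟩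
    simp [B, e, toBlocks₂₁, not_not.mp ha, hb]
  have h₂₂ : B.toBlocks₂₂ = 1 := by
    ext ⟨a, ha⟩ ⟨b, hb⟩
    simp [B, e, toBlocks₂₂, not_not.mp ha, not_not.mp hb, one_apply]
  rw [adjugate_apply, ← det_submatrix_equiv_self e]
  change B.det = _
  rw [← fromBlocks_toBlocks B, h₁₁, h₂₁, h₂₂, det_fromBlocks_zero₂₁, det_one, mul_one]

variable [Fintype ι] [DecidableEq ι]

theorem det_one_kronecker_sub_kronecker_single [CommRing R] (A : Matrix ι ι R)
    (D : Matrix κ κ R) (u : κ) (hD : IsUnit D.det) :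
    (1 ⊗ₖ D - A ⊗ₖ single u u 1 : Matrix (ι × κ) (ι × κ) R).det
      = (D.det • 1 - D.adjugate u u • A).det := by
  let U : Matrix (ι × κ) ι R := of fun x j => A x.1 j * D⁻¹ x.2 u
  let V : Matrix ι (ι × κ) R := of fun j y => if y = (j, u) then 1 else 0
  have hUV : U * V = A ⊗ₖ (D⁻¹ * single u u 1) := by
    ext ⟨i, a⟩ ⟨j, b⟩
    by_cases hb : b = u <;> simp [U, V, mul_apply, hb, single_apply, eq_comm (a := u)]
  have hVU : V * U = D⁻¹ u u • A := by
    ext i j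
    simp [U, V, mul_apply, mul_comm]
  have hfactor : 1 ⊗ₖ D - A ⊗ₖ single u u 1 = (1 ⊗ₖ D) * (1 - U * V) := by
    rw [mul_sub, mul_one, hUV, ← mul_kronecker_mul, Matrix.one_mul, ← Matrix.mul_assoc,
      mul_nonsing_inv D hD, Matrix.one_mul]
  have hscale : D.det • (1 - D⁻¹ u u • A) = D.det • 1 - D.adjugate u u • A := by
    rw [smul_sub, smul_smul, inv_def, smul_apply, smul_eq_mul, ← mul_assoc,
      Ring.mul_inverse_cancel _ hD, one_mul]
  rw [hfactor, det_mul, det_kronecker, det_one, one_pow, one_mul, det_one_sub_mul_comm, hVU,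
    ← hscale, det_smul]

theorem charmatrix_submatrix [CommRing R] {ν : Type*} [Fintype ν] [DecidableEq ν]
    (A : Matrix κ κ R) {e : ν → κ} (he : Function.Injective e) :
    (charmatrix A).submatrix e e = charmatrix (A.submatrix e e) := by
  ext a b
  by_cases hab : a = b
  · simp [hab]
  · simp [charmatrix_apply_ne _ _ _ hab, charmatrix_apply_ne _ _ _ (he.ne hab)]

end Matrix

open Matrix

variable {ι κ R : Type*} [Fintype ι] [DecidableEq ι] [Fintype κ] [DecidableEq κ]

def offDiag [Zero R] (S : Matrix ι ι R) : Matrix ι ι R :=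
  of fun i j => if i = j then 0 else S i j

/-- The adjacency matrix of `Σ[Π]`: a copy of `A` over every vertex of `Σ`, the copies of the
root `u` being joined along the edges of `S`; the diagonal of `S` plays no role. -/
def rootedProduct [Zero R] (S : Matrix ι ι R) (A : Matrix κ κ R) (u : κ) :
    Matrix (ι × κ) (ι × κ) R :=
  of fun x y => if x.1 = y.1 then A x.2 y.2 else if x.2 = u ∧ y.2 = u then S x.1 y.1 else 0

theorem charmatrix_rootedProduct [CommRing R] (S : Matrix ι ι R) (A : Matrix κ κ R) (u : κ) :
    charmatrix (rootedProduct S A u)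
      = 1 ⊗ₖ charmatrix A - (offDiag S).map C ⊗ₖ single u u 1 := by
  ext ⟨i, a⟩ ⟨j, b⟩
  by_cases hij : i = j
  · subst hij
    by_cases hab : a = b
    · subst hab
      simp [rootedProduct, offDiag]
    · simp [rootedProduct, offDiag, hab, charmatrix_apply_ne]
  · simp [rootedProduct, offDiag, hij, charmatrix_apply_ne, single_apply, eq_comm (a := u),
      apply_ite C]

theorem charpoly_rootedProduct [CommRing R] [IsDomain R] (S : Matrix ι ι R) (A : Matrix κ κ R)
    (u : κ) :
    (rootedProduct S A u).charpoly
      = (A.charpoly • 1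
          - (A.submatrix ((↑) : {a // a ≠ u} → κ) (↑)).charpoly • (offDiag S).map C).det := by
  -- `charmatrix A` becomes invertible over the fraction field of `R[X]`.
  let φ := algebraMap R[X] (FractionRing R[X])
  have hφ : Function.Injective φ := IsFractionRing.injective _ _
  have hunit : IsUnit ((charmatrix A).map φ).det := by
    rw [← RingHom.mapMatrix_apply, ← RingHom.map_det, isUnit_iff_ne_zero, map_ne_zero_iff _ hφ]
    exact A.charpoly_monic.ne_zero
  have hminor : ((charmatrix A).map φ).adjugate u u
      = φ (A.submatrix ((↑) : {a // a ≠ u} → κ) (↑)).charpoly := by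
    rw [← RingHom.mapMatrix_apply, ← RingHom.map_adjugate, RingHom.mapMatrix_apply, map_apply,
      adjugate_apply_self, charmatrix_submatrix _ Subtype.val_injective, charpoly]
  have hmap : ((charmatrix (rootedProduct S A u)).map φ)
      = 1 ⊗ₖ (charmatrix A).map φ - ((offDiag S).map C).map φ ⊗ₖ single u u 1 := by
    rw [charmatrix_rootedProduct]
    ext x y
    simp [kroneckerMap_apply, one_apply, single_apply, apply_ite φ]
  apply hφ
  rw [charpoly, RingHom.map_det, RingHom.mapMatrix_apply, hmap,
    det_one_kronecker_sub_kronecker_single _ _ u hunit, hminor,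
    ← RingHom.mapMatrix_apply, ← RingHom.map_det, ← charpoly, RingHom.map_det,
    RingHom.mapMatrix_apply]
  congr 1
  ext i j
  simp [one_apply, apply_ite φ]

theorem rooted_product_cospectral_general (n m : ℕ)
    (AS : Matrix (Fin n) (Fin n) ℝ)
    (AG AH : Matrix (Fin m) (Fin m) ℝ)
    (u v : Fin m)
    (hcos : AG.charpoly = AH.charpoly)
    (hcosdel : (AG.submatrix (fun a : {a : Fin m // a ≠ u} => (a : Fin m))
        (fun a : {a : Fin m // a ≠ u} => (a : Fin m))).charpoly
      = (AH.submatrix (fun a : {a : Fin m // a ≠ v} => (a : Fin m))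
        (fun a : {a : Fin m // a ≠ v} => (a : Fin m))).charpoly)
    (RG RH : Matrix (Fin n × Fin m) (Fin n × Fin m) ℝ)
    (hRG : ∀ x y : Fin n × Fin m, RG x y =
      if x.1 = y.1 then AG x.2 y.2
      else if x.2 = u ∧ y.2 = u then AS x.1 y.1 else 0)
    (hRH : ∀ x y : Fin n × Fin m, RH x y =
      if x.1 = y.1 then AH x.2 y.2
      else if x.2 = v ∧ y.2 = v then AS x.1 y.1 else 0) :
    RG.charpoly = RH.charpoly := by
  have hG : RG = rootedProduct AS AG u := Matrix.ext hRG
  have hH : RH = rootedProduct AS AH v := Matrix.ext hRH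
  rw [hG, hH, charpoly_rootedProduct, charpoly_rootedProduct, hcos, hcosdel]

/-- If G and H are cospectrally rooted graphs with roots u, v, then the signed
rooted products Σ[G⁺] and Σ[H⁺] are cospectral. -/
theorem rooted_product_cospectral (n m : ℕ)
    (AS : Matrix (Fin n) (Fin n) ℝ)
    (AG AH : Matrix (Fin m) (Fin m) ℝ)
    (hGsym : AG.IsSymm) (hHsym : AH.IsSymm)
    (hGval : ∀ a b, AG a b = 0 ∨ AG a b = 1) (hHval : ∀ a b, AH a b = 0 ∨ AH a b = 1)
    (hGdiag : ∀ a, AG a a = 0) (hHdiag : ∀ a, AH a a = 0)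
    (u v : Fin m)
    (hcos : AG.charpoly = AH.charpoly)
    (hcosdel : (AG.submatrix (fun a : {a : Fin m // a ≠ u} => (a : Fin m))
        (fun a : {a : Fin m // a ≠ u} => (a : Fin m))).charpoly
      = (AH.submatrix (fun a : {a : Fin m // a ≠ v} => (a : Fin m))
        (fun a : {a : Fin m // a ≠ v} => (a : Fin m))).charpoly)
    (RG RH : Matrix (Fin n × Fin m) (Fin n × Fin m) ℝ)
    (hRG : ∀ x y : Fin n × Fin m, RG x y =
      if x.1 = y.1 then AG x.2 y.2
      else if x.2 = u ∧ y.2 = u then AS x.1 y.1 else 0)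
    (hRH : ∀ x y : Fin n × Fin m, RH x y =
      if x.1 = y.1 then AH x.2 y.2
      else if x.2 = v ∧ y.2 = v then AS x.1 y.1 else 0) :
    RG.charpoly = RH.charpoly :=
  rooted_product_cospectral_general n m AS AG AH u v hcos hcosdel RG RH hRG hRH
end

section
/- Let Σ be a signed graph whose ground graph contains a unique clique of maximum size, and suppose the signed subgraph induced on that clique is not isomorphic (as a signed graph) to its negation. If Π is any rooted signed graph, then the rooted product Σ[Π] is not isomorphic to −Σ[Π], provided the clique size exceeds the clique number of Π. -/
/-! An isomorphism of the ground graph of `Σ[Π]` sends cliques to cliques. A clique of the rooted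
product lies either in one copy of `Π` or in the root layer, a copy of the ground of `Σ`. The image
of the root copy of the maximum clique `S` has `c` vertices, which is too many for a clique of `Π`;
so it lies in the root layer and, by uniqueness, is the root copy of `S` again. The isomorphism
therefore restricts to a sign-reversing automorphism of the clique `S`, which is excluded. -/

namespace SimpleGraph

variable {α β : Type*}

theorem isNClique_image [DecidableEq β] {H : SimpleGraph β} {s : Finset α} {f : α → β}
    (hf : (s : Set α).Pairwise fun a b => H.Adj (f a) (f b)) :
    H.IsNClique s.card (s.image f) := by
  have hinj : Set.InjOn f s := fun a ha b hb hab => by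
    by_contra hne
    exact (hf ha hb hne).ne hab
  refine ⟨?_, Finset.card_image_of_injOn hinj⟩
  rintro _ hx _ hy hxy
  simp only [Finset.coe_image, Set.mem_image, Finset.mem_coe] at hx hy
  obtain ⟨a, ha, rfl⟩ := hx
  obtain ⟨b, hb, rfl⟩ := hy
  exact hf ha hb fun hab => hxy (congrArg f hab)

/-- The ground graph of the rooted product `Σ[Π]`, for `Σ` on `G` and `Π` on `H` rooted at `r`. -/
def rootedProduct (G : SimpleGraph α) (H : SimpleGraph β) (r : β) : SimpleGraph (α × β) where
  Adj x y := (x.1 = y.1 ∧ H.Adj x.2 y.2) ∨ (x.2 = r ∧ y.2 = r ∧ G.Adj x.1 y.1)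
  symm := ⟨by
    rintro x y (⟨h1, h2⟩ | ⟨h1, h2, h3⟩)
    exacts [Or.inl ⟨h1.symm, h2.symm⟩, Or.inr ⟨h2, h1, h3.symm⟩]⟩
  loopless := ⟨by
    rintro x (⟨-, h⟩ | ⟨-, -, h⟩)
    exacts [H.irrefl h, G.irrefl h]⟩

variable {G : SimpleGraph α} {H : SimpleGraph β} {r : β}

theorem rootedProduct_adj_of_fst_eq {x y : α × β} (h : x.1 = y.1) :
    (G.rootedProduct H r).Adj x y ↔ H.Adj x.2 y.2 := by
  simp only [rootedProduct, h, SimpleGraph.irrefl, and_false, or_false, true_and]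

theorem rootedProduct_adj_of_fst_ne {x y : α × β} (h : x.1 ≠ y.1) :
    (G.rootedProduct H r).Adj x y ↔ x.2 = r ∧ y.2 = r ∧ G.Adj x.1 y.1 := by
  simp only [rootedProduct, h, false_and, false_or]

theorem rootedProduct_adj_of_snd_eq {x y : α × β} (hx : x.2 = r) (hy : y.2 = r) :
    (G.rootedProduct H r).Adj x y ↔ G.Adj x.1 y.1 := by
  simp only [rootedProduct, hx, hy, SimpleGraph.irrefl, and_false, false_or, true_and]

theorem rootedProduct_adj_root {a b : α} :
    (G.rootedProduct H r).Adj (a, r) (b, r) ↔ G.Adj a b :=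
  rootedProduct_adj_of_snd_eq rfl rfl

theorem IsClique.rootedProduct_fiber_or_root {s : Set (α × β)}
    (hs : (G.rootedProduct H r).IsClique s) :
    (∀ x ∈ s, ∀ y ∈ s, x.1 = y.1) ∨ ∀ x ∈ s, x.2 = r := by
  refine or_iff_not_imp_left.2 fun h => ?_
  push Not at h
  obtain ⟨x, hx, y, hy, hxy⟩ := h
  have root_of_fst_ne {z w : α × β} (hz : z ∈ s) (hw : w ∈ s) (hzw : z.1 ≠ w.1) : z.2 = r :=
    ((rootedProduct_adj_of_fst_ne hzw).1 (hs hz hw fun h => hzw (congrArg Prod.fst h))).1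
  intro z hz
  by_cases hzx : z.1 = x.1
  · exact root_of_fst_ne hz hy (hzx ▸ hxy)
  · exact root_of_fst_ne hz hx hzx

section MaximumClique

variable [DecidableEq α] [DecidableEq β] {c : ℕ} {S : Finset α}

theorem rootedProduct_iso_mapsTo_root (hS : G.IsNClique c S)
    (huniq : ∀ T : Finset α, G.IsNClique c T → T = S)
    (hH : ∀ T : Finset β, H.IsClique (T : Set β) → T.card < c)
    (e : G.rootedProduct H r ≃g G.rootedProduct H r) {a : α} (ha : a ∈ S) :
    (e (a, r)).2 = r ∧ (e (a, r)).1 ∈ S := by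
  set K := S.image fun a => e (a, r)
  have hK : (G.rootedProduct H r).IsNClique c K := by
    rw [← hS.card_eq]
    refine isNClique_image fun a ha b hb hab => ?_
    exact e.map_adj_iff.2 (rootedProduct_adj_root.2 (hS.isClique ha hb hab))
  have hmem : e (a, r) ∈ K := Finset.mem_image_of_mem _ ha
  rcases hK.isClique.rootedProduct_fiber_or_root with hfiber | hroot
  · have hKH : H.IsNClique c (K.image Prod.snd) := by
      rw [← hK.card_eq]
      refine isNClique_image fun x hx y hy hxy => ?_
      exact (rootedProduct_adj_of_fst_eq (hfiber x hx y hy)).1 (hK.isClique hx hy hxy)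
    exact absurd hKH.card_eq (hH _ hKH.isClique).ne
  · have hKG : G.IsNClique c (K.image Prod.fst) := by
      rw [← hK.card_eq]
      refine isNClique_image fun x hx y hy hxy => ?_
      exact (rootedProduct_adj_of_snd_eq (hroot x hx) (hroot y hy)).1 (hK.isClique hx hy hxy)
    exact ⟨hroot _ hmem, huniq _ hKG ▸ Finset.mem_image_of_mem _ hmem⟩

theorem exists_perm_of_rootedProduct_iso (hS : G.IsNClique c S)
    (huniq : ∀ T : Finset α, G.IsNClique c T → T = S)
    (hH : ∀ T : Finset β, H.IsClique (T : Set β) → T.card < c)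
    (e : G.rootedProduct H r ≃g G.rootedProduct H r) :
    ∃ φ : S ≃ S, ∀ a : S, e (a, r) = ((φ a : α), r) := by
  have hmaps (a : S) := rootedProduct_iso_mapsTo_root hS huniq hH e a.2
  let f (a : S) : S := ⟨(e (a, r)).1, (hmaps a).2⟩
  have hf (a : S) : e (a, r) = ((f a : α), r) := Prod.ext rfl (hmaps a).1
  have hinj : f.Injective := fun a b hab => by
    have := e.injective ((hf a).trans (hab ▸ hf b).symm)
    exact Subtype.ext (congrArg Prod.fst this)
  exact ⟨Equiv.ofBijective f (Finite.injective_iff_bijective.1 hinj), hf⟩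

end MaximumClique

end SimpleGraph

theorem rooted_product_not_sign_symmetric_general (n m : ℕ)
    (G : SimpleGraph (Fin n)) (σ : Fin n → Fin n → ℝ)
    (H : SimpleGraph (Fin m)) (τ : Fin m → Fin m → ℝ) (r : Fin m)
    (c : ℕ) (S : Finset (Fin n))
    (hSclique : G.IsClique (S : Set (Fin n))) (hScard : S.card = c)
    (huniq : ∀ T : Finset (Fin n), G.IsClique (T : Set (Fin n)) → T.card = c → T = S)
    (hH : ∀ T : Finset (Fin m), H.IsClique (T : Set (Fin m)) → T.card < c)
    (hni : ¬ ∃ φ : {x // x ∈ S} ≃ {x // x ∈ S},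
      ∀ a b : {x // x ∈ S},
        (G.Adj a.1 b.1 ↔ G.Adj (φ a).1 (φ b).1) ∧
        (G.Adj a.1 b.1 → σ a.1 b.1 = -(σ (φ a).1 (φ b).1)))
    (RAdj : Fin n × Fin m → Fin n × Fin m → Prop)
    (hRAdj : ∀ x y, RAdj x y ↔
      ((x.1 = y.1 ∧ H.Adj x.2 y.2) ∨ (x.2 = r ∧ y.2 = r ∧ G.Adj x.1 y.1)))
    (Rσ : Fin n × Fin m → Fin n × Fin m → ℝ)
    (hRσ : ∀ x y, Rσ x y = if x.1 = y.1 then τ x.2 y.2 else σ x.1 y.1) :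
    ¬ ∃ ψ : Fin n × Fin m ≃ Fin n × Fin m,
      ∀ x y, (RAdj x y ↔ RAdj (ψ x) (ψ y)) ∧
        (RAdj x y → Rσ x y = -(Rσ (ψ x) (ψ y))) := by
  rintro ⟨ψ, hψ⟩
  obtain rfl : RAdj = (G.rootedProduct H r).Adj :=
    funext fun x => funext fun y => propext (hRAdj x y)
  let e : G.rootedProduct H r ≃g G.rootedProduct H r := ⟨ψ, fun {x y} => (hψ x y).1.symm⟩
  obtain ⟨φ, hφ⟩ := SimpleGraph.exists_perm_of_rootedProduct_iso ⟨hSclique, hScard⟩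
    (fun T hT => huniq T hT.1 hT.2) hH e
  have hψφ (a : S) : ψ (a, r) = ((φ a : Fin n), r) := hφ a
  refine hni ⟨φ, fun a b => ⟨?_, fun hab => ?_⟩⟩
  · simpa only [SimpleGraph.rootedProduct_adj_root, hψφ] using (hψ (a, r) (b, r)).1
  · have hsign := (hψ (a, r) (b, r)).2 (SimpleGraph.rootedProduct_adj_root.2 hab)
    have hφab : (φ a : Fin n) ≠ φ b :=
      (Subtype.val_injective.comp φ.injective).ne (ne_of_apply_ne Subtype.val hab.ne)
    simpa only [hψφ, hRσ, if_neg hab.ne, if_neg hφab] using hsign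

/-- If the ground of Σ has a unique maximum clique on which the induced signed
graph is not isomorphic to its negation, and the clique size exceeds the clique
number of Π, then the rooted product Σ[Π] is not isomorphic to −Σ[Π]. -/
theorem rooted_product_not_sign_symmetric (n m : ℕ)
    (G : SimpleGraph (Fin n)) (σ : Fin n → Fin n → ℝ)
    (H : SimpleGraph (Fin m)) (τ : Fin m → Fin m → ℝ) (r : Fin m)
    (c : ℕ) (S : Finset (Fin n))
    (hSclique : G.IsClique (S : Set (Fin n))) (hScard : S.card = c)
    (hmax : ∀ T : Finset (Fin n), G.IsClique (T : Set (Fin n)) → T.card ≤ c)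
    (huniq : ∀ T : Finset (Fin n), G.IsClique (T : Set (Fin n)) → T.card = c → T = S)
    (hH : ∀ T : Finset (Fin m), H.IsClique (T : Set (Fin m)) → T.card < c)
    (hni : ¬ ∃ φ : {x // x ∈ S} ≃ {x // x ∈ S},
      ∀ a b : {x // x ∈ S},
        (G.Adj a.1 b.1 ↔ G.Adj (φ a).1 (φ b).1) ∧
        (G.Adj a.1 b.1 → σ a.1 b.1 = -(σ (φ a).1 (φ b).1)))
    (RAdj : Fin n × Fin m → Fin n × Fin m → Prop)
    (hRAdj : ∀ x y, RAdj x y ↔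
      ((x.1 = y.1 ∧ H.Adj x.2 y.2) ∨ (x.2 = r ∧ y.2 = r ∧ G.Adj x.1 y.1)))
    (Rσ : Fin n × Fin m → Fin n × Fin m → ℝ)
    (hRσ : ∀ x y, Rσ x y = if x.1 = y.1 then τ x.2 y.2 else σ x.1 y.1) :
    ¬ ∃ ψ : Fin n × Fin m ≃ Fin n × Fin m,
      ∀ x y, (RAdj x y ↔ RAdj (ψ x) (ψ y)) ∧
        (RAdj x y → Rσ x y = -(Rσ (ψ x) (ψ y))) :=
  rooted_product_not_sign_symmetric_general n m G σ H τ r c S hSclique hScard huniq hH hni RAdj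
    hRAdj Rσ hRσ
end
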